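/- Suppose maps fit into a commutative ladder of two long exact sequences H^{p-1}(X̃) → H^{p-1}(U) →^{∂} H^{p-2}(E) →^{i*} H^{p}(X̃) → H^{p}(U) and H^{p-1}(X) → H^{p-1}(U) →^{∂} H^{p-2r-2}(Y) → H^{p}(X) → H^{p}(U), with identity maps on H(U) and with vertical maps τ* : H(X̃) → H(X) and π* : H(E) → H(Y) that are surjective, split by sections τ^* resp. (H^*)^r with τ_* τ^* = id, π_* (H^*)^r = id. Then i* restricts to an isomorphism ker(π* : H^{p-2}(E) → H^{p-2r-2}(Y)) ≅ ker(τ* : H^p(X̃) → H^p(X)). -/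
import Mathlib


/-- Abstract form of the 'isomorphism of kernels' lemma in the blow-up formula for
refined unramified cohomology: given a commutative ladder of two five-term exact
sequences of abelian groups
`H^{p-1}(X̃) → H^{p-1}(U) → H^{p-2}(E) → H^p(X̃) → H^p(U)` and
`H^{p-1}(X) → H^{p-1}(U) → H^{p-2r-2}(Y) → H^p(X) → H^p(U)`,
with vertical maps `τ₁ : H^{p-1}(X̃) → H^{p-1}(X)`, `π : H^{p-2}(E) → H^{p-2r-2}(Y)`,
`τ₂ : H^p(X̃) → H^p(X)` admitting sections (hence surjective) and identity maps on the
`H(U)`-spots, the map `i* : H^{p-2}(E) → H^p(X̃)` restricts to an isomorphism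
`ker π ≅ ker τ₂`. -/
theorem stmt_8 {A₁ U₁ E₂ A₂ U₂ B₁ Y₂ B₂ : Type*}
    [AddCommGroup A₁] [AddCommGroup U₁] [AddCommGroup E₂] [AddCommGroup A₂] [AddCommGroup U₂]
    [AddCommGroup B₁] [AddCommGroup Y₂] [AddCommGroup B₂]
    -- top row
    (r₁ : A₁ →+ U₁) (bd₁ : U₁ →+ E₂) (iE : E₂ →+ A₂) (r₂ : A₂ →+ U₂)
    -- bottom row
    (r₁' : B₁ →+ U₁) (bd₂ : U₁ →+ Y₂) (iY : Y₂ →+ B₂) (r₂' : B₂ →+ U₂)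
    -- vertical maps
    (τ₁ : A₁ →+ B₁) (π : E₂ →+ Y₂) (τ₂ : A₂ →+ B₂)
    -- sections of the vertical maps
    (sτ₁ : B₁ →+ A₁) (sπ : Y₂ →+ E₂) (sτ₂ : B₂ →+ A₂)
    (hsτ₁ : ∀ x, τ₁ (sτ₁ x) = x) (hsπ : ∀ x, π (sπ x) = x) (hsτ₂ : ∀ x, τ₂ (sτ₂ x) = x)
    -- commutativity of the ladder (identity maps at the `U`-spots)
    (hsq₁ : ∀ x : A₁, r₁' (τ₁ x) = r₁ x)
    (hsq₂ : ∀ u : U₁, π (bd₁ u) = bd₂ u)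
    (hsq₃ : ∀ x : E₂, τ₂ (iE x) = iY (π x))
    (hsq₄ : ∀ x : A₂, r₂' (τ₂ x) = r₂ x)
    -- exactness of the top row at U₁, E₂, A₂
    (ht₁ : ∀ x, bd₁ x = 0 ↔ x ∈ r₁.range)
    (ht₂ : ∀ x, iE x = 0 ↔ x ∈ bd₁.range)
    (ht₃ : ∀ x, r₂ x = 0 ↔ x ∈ iE.range)
    -- exactness of the bottom row at U₁, Y₂, B₂
    (hb₁ : ∀ x, bd₂ x = 0 ↔ x ∈ r₁'.range)
    (hb₂ : ∀ x, iY x = 0 ↔ x ∈ bd₂.range)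
    (hb₃ : ∀ x, r₂' x = 0 ↔ x ∈ iY.range) :
    -- `i*` maps `ker π` into `ker τ₂`, injectively and onto
    (∀ x : E₂, π x = 0 → τ₂ (iE x) = 0) ∧
    (∀ x : E₂, π x = 0 → iE x = 0 → x = 0) ∧
    (∀ y : A₂, τ₂ y = 0 → ∃ x : E₂, π x = 0 ∧ iE x = y) := by
  refine ⟨fun x hx => by rw [hsq₃, hx, map_zero], ?_, ?_⟩
  · intro x hπ hiE
    obtain ⟨u, hu⟩ := (ht₂ x).mp hiE
    have hbd₂ : bd₂ u = 0 := by rw [← hsq₂, hu, hπ]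
    obtain ⟨b, hb⟩ := (hb₁ u).mp hbd₂
    have h1 : u = r₁ (sτ₁ b) := by rw [← hsq₁, hsτ₁, hb]
    have h2 : bd₁ u = 0 := by
      rw [h1]; exact (ht₁ _).mpr ⟨sτ₁ b, rfl⟩
    rw [← hu, h2]
  · intro y hy
    have hr₂ : r₂ y = 0 := by rw [← hsq₄, hy, map_zero]
    obtain ⟨x, hx⟩ := (ht₃ y).mp hr₂
    have hiY : iY (π x) = 0 := by rw [← hsq₃, hx, hy]
    obtain ⟨u, hu⟩ := (hb₂ (π x)).mp hiY
    refine ⟨x - bd₁ u, ?_, ?_⟩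
    · rw [map_sub, hsq₂, hu, sub_self]
    · have h0 : iE (bd₁ u) = 0 := (ht₂ _).mpr ⟨u, rfl⟩
      rw [map_sub, h0, sub_zero, hx]
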